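/- Let K be a real symmetric 3×3 matrix with pairwise distinct positive eigenvalues. Then there exists a constant σ > 0 such that for every Q ∈ SO(3), σ ‖K Q − Qᵀ K‖_F² ≤ tr(K (I₃ − Q)), where ‖·‖_F denotes the Frobenius norm. -/

import Mathlib

open Matrix

set_option maxHeartbeats 1000000

/-- The squared Frobenius norm `‖M‖_F² = ∑ i j, (M i j)²`. -/
def frobSq (M : Matrix (Fin 3) (Fin 3) ℝ) : ℝ := ∑ i, ∑ j, (M i j) ^ 2


lemma pairIneq (a b S x y : ℝ) (ha : 0 < a) (hb : 0 < b) (haS : a ≤ S) (hbS : b ≤ S) :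
    2 * (a*x - b*y)^2 ≤ 4 * S^2 * (x^2 + y^2) := by
  nlinarith [sq_nonneg (a*x + b*y), sq_nonneg (a*x - b*y),
    mul_nonneg (mul_nonneg (sub_nonneg.2 haS) (by linarith : (0:ℝ) ≤ S + a)) (sq_nonneg x),
    mul_nonneg (mul_nonneg (sub_nonneg.2 hbS) (by linarith : (0:ℝ) ≤ S + b)) (sq_nonneg y)]

lemma prodSqBound (a b c : ℝ) (ha : 0 < a) (hb : 0 < b) (hc : 0 < c) :
    b * c ≤ (a + b + c)^2 := by nlinarith [mul_pos ha hb, mul_pos ha hc, mul_pos hb hc]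

lemma core (k : Fin 3 → ℝ) (hk : ∀ i, 0 < k i) (Q : Matrix (Fin 3) (Fin 3) ℝ)
    (hQ : Qᵀ * Q = 1) :
    (k 0 * k 1 * k 2) / (8 * (k 0 + k 1 + k 2)^4) * frobSq (diagonal k * Q - Qᵀ * diagonal k)
      ≤ (diagonal k * (1 - Q)).trace := by
  have hk0 := hk 0; have hk1 := hk 1; have hk2 := hk 2
  set S := k 0 + k 1 + k 2 with hS
  set P := k 0 * k 1 * k 2 with hP
  have hSpos : 0 < S := by positivity
  have hPpos : 0 < P := by positivity
  have h00 := congrFun (congrFun hQ 0) 0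
  have h11 := congrFun (congrFun hQ 1) 1
  have h22 := congrFun (congrFun hQ 2) 2
  simp only [mul_apply, transpose_apply, Fin.sum_univ_three, one_apply_eq] at h00 h11 h22
  have htr : (diagonal k * (1 - Q)).trace
      = k 0 * (1 - Q 0 0) + k 1 * (1 - Q 1 1) + k 2 * (1 - Q 2 2) := by
    simp [trace, diag, Fin.sum_univ_three, diagonal_mul, Matrix.sub_apply, one_apply]
  have hfr : frobSq (diagonal k * Q - Qᵀ * diagonal k)
      = 2*(k 0 * Q 0 1 - k 1 * Q 1 0)^2 + 2*(k 0 * Q 0 2 - k 2 * Q 2 0)^2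
        + 2*(k 1 * Q 1 2 - k 2 * Q 2 1)^2 := by
    simp only [frobSq, Fin.sum_univ_three, Matrix.sub_apply, diagonal_mul, mul_diagonal,
      transpose_apply]
    ring
  rw [htr, hfr, div_mul_eq_mul_div, div_le_iff₀ (by positivity)]
  have hq0 : (Q 0 0)^2 ≤ 1 := by nlinarith [sq_nonneg (Q 1 0), sq_nonneg (Q 2 0)]
  have hq1 : (Q 1 1)^2 ≤ 1 := by nlinarith [sq_nonneg (Q 0 1), sq_nonneg (Q 2 1)]
  have hq2 : (Q 2 2)^2 ≤ 1 := by nlinarith [sq_nonneg (Q 0 2), sq_nonneg (Q 1 2)]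
  have hd0 : 0 ≤ 1 - Q 0 0 := by nlinarith
  have hd1 : 0 ≤ 1 - Q 1 1 := by nlinarith
  have hd2 : 0 ≤ 1 - Q 2 2 := by nlinarith
  have p1 := pairIneq (k 0) (k 1) S (Q 0 1) (Q 1 0) hk0 hk1 (by linarith) (by linarith)
  have p2 := pairIneq (k 0) (k 2) S (Q 0 2) (Q 2 0) hk0 hk2 (by linarith) (by linarith)
  have p3 := pairIneq (k 1) (k 2) S (Q 1 2) (Q 2 1) hk1 hk2 (by linarith) (by linarith)
  have hoff : (Q 1 0)^2 + (Q 2 0)^2 + (Q 0 1)^2 + (Q 2 1)^2 + (Q 0 2)^2 + (Q 1 2)^2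
      ≤ 2 * ((1 - Q 0 0) + (1 - Q 1 1) + (1 - Q 2 2)) := by
    nlinarith [sq_nonneg (1 - Q 0 0), sq_nonneg (1 - Q 1 1), sq_nonneg (1 - Q 2 2)]
  have hF8 : 2*(k 0 * Q 0 1 - k 1 * Q 1 0)^2 + 2*(k 0 * Q 0 2 - k 2 * Q 2 0)^2
        + 2*(k 1 * Q 1 2 - k 2 * Q 2 1)^2
      ≤ 8 * S^2 * ((1 - Q 0 0) + (1 - Q 1 1) + (1 - Q 2 2)) :=
    calc 2*(k 0 * Q 0 1 - k 1 * Q 1 0)^2 + 2*(k 0 * Q 0 2 - k 2 * Q 2 0)^2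
          + 2*(k 1 * Q 1 2 - k 2 * Q 2 1)^2
        ≤ 4 * S^2 * ((Q 1 0)^2 + (Q 2 0)^2 + (Q 0 1)^2 + (Q 2 1)^2 + (Q 0 2)^2 + (Q 1 2)^2) := by
          linarith [p1, p2, p3]
      _ ≤ 4 * S^2 * (2 * ((1 - Q 0 0) + (1 - Q 1 1) + (1 - Q 2 2))) :=
          mul_le_mul_of_nonneg_left hoff (by positivity)
      _ = 8 * S^2 * ((1 - Q 0 0) + (1 - Q 1 1) + (1 - Q 2 2)) := by ring
  have hm01 := mul_pos hk0 hk1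
  have hm02 := mul_pos hk0 hk2
  have hm12 := mul_pos hk1 hk2
  have hS12 : k 1 * k 2 ≤ S^2 := prodSqBound _ _ _ hk0 hk1 hk2
  have hS02 : k 0 * k 2 ≤ S^2 := by
    have := prodSqBound (k 1) (k 0) (k 2) hk1 hk0 hk2
    calc k 0 * k 2 ≤ (k 1 + k 0 + k 2)^2 := this
      _ = S^2 := by rw [hS]; ring
  have hS01 : k 0 * k 1 ≤ S^2 := by
    have := prodSqBound (k 2) (k 0) (k 1) hk2 hk0 hk1
    calc k 0 * k 1 ≤ (k 2 + k 0 + k 1)^2 := this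
      _ = S^2 := by rw [hS]; ring
  have h30 : P ≤ k 0 * S^2 := by
    calc P = k 0 * (k 1 * k 2) := by rw [hP]; ring
      _ ≤ k 0 * S^2 := mul_le_mul_of_nonneg_left hS12 hk0.le
  have h31 : P ≤ k 1 * S^2 := by
    calc P = k 1 * (k 0 * k 2) := by rw [hP]; ring
      _ ≤ k 1 * S^2 := mul_le_mul_of_nonneg_left hS02 hk1.le
  have h32 : P ≤ k 2 * S^2 := by
    calc P = k 2 * (k 0 * k 1) := by rw [hP]; ring
      _ ≤ k 2 * S^2 := mul_le_mul_of_nonneg_left hS01 hk2.le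
  have h3 : ((1 - Q 0 0) + (1 - Q 1 1) + (1 - Q 2 2)) * P
      ≤ S^2 * (k 0 * (1 - Q 0 0) + k 1 * (1 - Q 1 1) + k 2 * (1 - Q 2 2)) := by
    have e0 := mul_le_mul_of_nonneg_right h30 hd0
    have e1 := mul_le_mul_of_nonneg_right h31 hd1
    have e2 := mul_le_mul_of_nonneg_right h32 hd2
    linarith [e0, e1, e2]
  calc P * (2*(k 0 * Q 0 1 - k 1 * Q 1 0)^2 + 2*(k 0 * Q 0 2 - k 2 * Q 2 0)^2
        + 2*(k 1 * Q 1 2 - k 2 * Q 2 1)^2)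
      ≤ P * (8 * S^2 * ((1 - Q 0 0) + (1 - Q 1 1) + (1 - Q 2 2))) :=
        mul_le_mul_of_nonneg_left hF8 hPpos.le
    _ = 8 * S^2 * (((1 - Q 0 0) + (1 - Q 1 1) + (1 - Q 2 2)) * P) := by ring
    _ ≤ 8 * S^2 * (S^2 * (k 0 * (1 - Q 0 0) + k 1 * (1 - Q 1 1) + k 2 * (1 - Q 2 2))) :=
        mul_le_mul_of_nonneg_left h3 (by positivity)
    _ = (k 0 * (1 - Q 0 0) + k 1 * (1 - Q 1 1) + k 2 * (1 - Q 2 2)) * (8 * S^4) := by ring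

lemma frobSq_eq_trace (M : Matrix (Fin 3) (Fin 3) ℝ) : frobSq M = (M * Mᵀ).trace := by
  simp [frobSq, trace, diag, mul_apply, Fin.sum_univ_three]; ring

lemma frobSq_conj (U M : Matrix (Fin 3) (Fin 3) ℝ) (hU1 : Uᵀ * U = 1) (hU2 : U * Uᵀ = 1) :
    frobSq (U * M * Uᵀ) = frobSq M := by
  rw [frobSq_eq_trace, frobSq_eq_trace]
  have : (U * M * Uᵀ) * (U * M * Uᵀ)ᵀ = U * (M * Mᵀ) * Uᵀ := by
    simp only [transpose_mul, transpose_transpose, Matrix.mul_assoc]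
    rw [show Uᵀ * (U * (Mᵀ * Uᵀ)) = Mᵀ * Uᵀ by rw [← Matrix.mul_assoc, hU1, Matrix.one_mul]]
  rw [this, Matrix.trace_mul_cycle, ← Matrix.mul_assoc, hU1, Matrix.one_mul]

/-- If the symmetric matrix `K` has pairwise distinct positive eigenvalues,
then for some `σ > 0`, `σ ‖K Q − Qᵀ K‖_F² ≤ tr(K (I₃ − Q))` for every `Q ∈ SO(3)`. -/
theorem error_vector_lower_bound
    (K : Matrix (Fin 3) (Fin 3) ℝ) (hK : K.IsHermitian)
    (hpos : ∀ i, 0 < hK.eigenvalues i)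
    (hdist : Function.Injective hK.eigenvalues) :
    ∃ σ : ℝ, 0 < σ ∧
      ∀ Q : Matrix (Fin 3) (Fin 3) ℝ, Qᵀ * Q = 1 → Q.det = 1 →
        σ * frobSq (K * Q - Qᵀ * K) ≤ (K * (1 - Q)).trace := by
  set k := hK.eigenvalues with hk
  set U := (hK.eigenvectorUnitary : Matrix (Fin 3) (Fin 3) ℝ) with hUdef
  have hmem := hK.eigenvectorUnitary.2
  rw [Matrix.mem_unitaryGroup_iff'] at hmem  -- star U * U = 1
  have hmem2 := hK.eigenvectorUnitary.2
  rw [Matrix.mem_unitaryGroup_iff] at hmem2  -- U * star U = 1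
  have hstar : star (U : Matrix (Fin 3) (Fin 3) ℝ) = Uᵀ := by
    ext i j; simp [Matrix.star_apply]
  have hU1 : Uᵀ * U = 1 := by rw [← hstar]; exact hmem
  have hU2 : U * Uᵀ = 1 := by rw [← hstar]; exact hmem2
  set D := diagonal k with hD
  have hspec : K = U * D * Uᵀ := by
    have h := hK.spectral_theorem
    have h2 : (RCLike.ofReal ∘ hK.eigenvalues : Fin 3 → ℝ) = k := rfl
    rw [Unitary.conjStarAlgAut_apply, ← hUdef, hstar] at h
    exact h
  have hk0 := hpos 0; have hk1 := hpos 1; have hk2 := hpos 2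
  refine ⟨(k 0 * k 1 * k 2) / (8 * (k 0 + k 1 + k 2)^4), by positivity, ?_⟩
  intro Q hQ _
  set Q' := Uᵀ * Q * U with hQ'def
  have hQ'orth : Q'ᵀ * Q' = 1 := by
    rw [hQ'def]
    simp only [transpose_mul, transpose_transpose, Matrix.mul_assoc]
    rw [show U * (Uᵀ * (Q * U)) = Q * U by rw [← Matrix.mul_assoc, hU2, Matrix.one_mul],
      show Qᵀ * (Q * U) = U by rw [← Matrix.mul_assoc, hQ, Matrix.one_mul], hU1]
  have hfrob : frobSq (K * Q - Qᵀ * K) = frobSq (D * Q' - Q'ᵀ * D) := by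
    have hid : U * (D * Q' - Q'ᵀ * D) * Uᵀ = K * Q - Qᵀ * K := by
      rw [Matrix.mul_sub, Matrix.sub_mul, hQ'def, hspec]
      simp only [transpose_mul, transpose_transpose, Matrix.mul_assoc]
      rw [show Q * (U * Uᵀ) = Q by rw [hU2, Matrix.mul_one],
        show U * (Uᵀ * (Qᵀ * (U * (D * Uᵀ)))) = Qᵀ * (U * (D * Uᵀ)) by
          rw [← Matrix.mul_assoc, hU2, Matrix.one_mul]]
    rw [← hid, frobSq_conj _ _ hU1 hU2]
  have e2 : Uᵀ * (1 - Q) * U = 1 - Uᵀ * Q * U := by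
    rw [Matrix.mul_sub, Matrix.mul_one, Matrix.sub_mul, hU1, Matrix.mul_assoc]
  have htrace : (K * (1 - Q)).trace = (D * (1 - Q')).trace := by
    rw [hspec, hQ'def]
    calc (U * D * Uᵀ * (1 - Q)).trace = (U * (D * (Uᵀ * (1 - Q)))).trace := by
          simp only [Matrix.mul_assoc]
      _ = ((D * (Uᵀ * (1 - Q))) * U).trace := Matrix.trace_mul_comm _ _
      _ = (D * (Uᵀ * (1 - Q) * U)).trace := by simp only [Matrix.mul_assoc]
      _ = (D * (1 - Uᵀ * Q * U)).trace := by rw [e2]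
  rw [hfrob, htrace]
  exact core k hpos Q' hQ'orth
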